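/- arXiv:2304.02775 — 4 statements merged into one kernel-verified Lean document; each statement's English description precedes it below -/
import Mathlib

section
/- Under Assumptions A1 and A2, the Metropolis–Hastings transition kernel K satisfies the Feller property: for every sequence {x_n} ⊂ S with x_n → x ∈ S, the measures K(x_n, ·) converge weakly to K(x, ·), i.e. ∫ f(y) K(x_n, dy) → ∫ f(y) K(x, dy) for every bounded continuous f : S → ℝ. -/
open MeasureTheory ProbabilityTheory Filter Set Metric
open scoped ENNReal NNReal Topology

noncomputable section

namespace MHLDP

variable {α : Type*}

open Classical in
/-- Relative entropy `R(μ‖ν) = ∫ log (dμ/dν) dμ` if `μ ≪ ν` (and the integral exists),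
`+∞` otherwise. -/
def relEnt [MeasurableSpace α] (μ ν : Measure α) : ℝ≥0∞ :=
  if μ ≪ ν ∧ Integrable (fun x => Real.log ((μ.rnDeriv ν x).toReal)) μ
  then ENNReal.ofReal (∫ x, Real.log ((μ.rnDeriv ν x).toReal) ∂μ)
  else ⊤

variable {d : ℕ} {S : Set (EuclideanSpace ℝ (Fin d))}

/-- Lebesgue measure on (the subtype) `S ⊆ ℝ^d`. -/
def leb (S : Set (EuclideanSpace ℝ (Fin d))) : Measure S :=
  Measure.comap Subtype.val volume

/-- The Hastings ratio `min{1, π(y)J(x|y)/(π(x)J(y|x))}`, set to `1` when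
`π(x)J(y|x) = 0`.  Here `Jd x y` denotes the density `J(y|x)`. -/
def hastingsRatio (πd : S → ℝ) (Jd : S → S → ℝ) (x y : S) : ℝ :=
  if πd x * Jd x y = 0 then 1 else min 1 ((πd y * Jd y x) / (πd x * Jd x y))

/-- The Lebesgue density `a(x,y)` of the acceptance part of the MH kernel. -/
def accDens (πd : S → ℝ) (Jd : S → S → ℝ) (x y : S) : ℝ :=
  hastingsRatio πd Jd x y * Jd x y

/-- The acceptance sub-probability kernel `a(x,dy)`. -/
def acc (πd : S → ℝ) (Jd : S → S → ℝ) (x : S) : Measure S :=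
  (leb S).withDensity (fun y => ENNReal.ofReal (accDens πd Jd x y))

/-- The rejection probability `r(x) = 1 - a(x,S)`. -/
def rej (πd : S → ℝ) (Jd : S → S → ℝ) (x : S) : ℝ :=
  1 - (acc πd Jd x Set.univ).toReal

/-- The Metropolis–Hastings transition kernel `K(x,dy) = a(x,dy) + r(x) δ_x(dy)`. -/
def mhK (πd : S → ℝ) (Jd : S → S → ℝ) (x : S) : Measure S :=
  acc πd Jd x + ENNReal.ofReal (rej πd Jd x) • Measure.dirac x

/-- `μ` is an invariant measure for the transition kernel `q`. -/
def Invariant [MeasurableSpace α] (μ : Measure α) (q : α → Measure α) : Prop :=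
  ∀ A : Set α, MeasurableSet A → μ A = ∫⁻ x, q x A ∂μ

/-- The rate function `I(ν) = inf_q ∫ R(q(x,·) ‖ K(x,·)) ν(dx)`, infimum over Markov
transition kernels `q` with invariant measure `ν`. -/
def rateI [MeasurableSpace α] (K : α → Measure α) (ν : Measure α) : ℝ≥0∞ :=
  ⨅ (q : Kernel α α) (_ : IsMarkovKernel q) (_ : Invariant ν (fun x => q x)),
    ∫⁻ x, relEnt (q x) (K x) ∂ν

/-- The joint measure `(μ ⊗ K)(dx dy) = μ(dx) K(x,dy)` on `S × S`. -/
def prodK [MeasurableSpace α] (μ : Measure α) (K : α → Measure α) : Measure (α × α) :=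
  μ.bind fun x => (K x).map fun y => (x, y)

/-- The rate function `I(μ) = inf_{γ ∈ A(μ)} R(γ ‖ μ ⊗ K)`, infimum over probability
measures on `S × S` with both marginals equal to `μ`. -/
def rateEmp [MeasurableSpace α] (K : α → Measure α) (μ : Measure α) : ℝ≥0∞ :=
  ⨅ (γ : Measure (α × α)) (_ : IsProbabilityMeasure γ)
    (_ : γ.map Prod.fst = μ) (_ : γ.map Prod.snd = μ), relEnt γ (prodK μ K)

/-- Assumptions (A.1) and (A.2): `π` is a probability measure on `S` with continuous
density `πd` w.r.t. Lebesgue measure, equivalent to Lebesgue measure; the proposal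
distributions `J(·|x)` are probability measures with jointly continuous, bounded,
strictly positive density `Jd x · = J(·|x)`, absolutely continuous w.r.t. `π`. -/
structure Assumptions (πd : S → ℝ) (Jd : S → S → ℝ) (π : Measure S) : Prop where
  measS : MeasurableSet S
  prob_pi : IsProbabilityMeasure π
  pi_nonneg : ∀ x, 0 ≤ πd x
  pi_dens : π = (leb S).withDensity (fun x => ENNReal.ofReal (πd x))
  pi_cont : Continuous πd
  pi_ac : π ≪ leb S
  leb_ac : leb S ≪ π
  J_nonneg : ∀ x y, 0 ≤ Jd x y
  J_dens_prob : ∀ x, IsProbabilityMeasure ((leb S).withDensity (fun y => ENNReal.ofReal (Jd x y)))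
  J_ac_pi : ∀ x, (leb S).withDensity (fun y => ENNReal.ofReal (Jd x y)) ≪ π
  J_cont : Continuous (fun p : S × S => Jd p.1 p.2)
  J_bdd : ∃ C : ℝ, ∀ x y, Jd x y ≤ C
  J_pos : ∀ x y, 0 < Jd x y

/-- Assumption (A.3): existence of a Lyapunov function `U` for the kernel `K`. -/
structure Lyapunov (K : S → Measure S) (U : S → ℝ) : Prop where
  nonneg : ∀ x, 0 ≤ U x
  lb : ∃ M : ℝ, ∀ x, (M : EReal) ≤ (U x : EReal)
        - ENNReal.log (∫⁻ y, ENNReal.ofReal (Real.exp (U y)) ∂(K x))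
  cpt : ∀ M : ℝ, IsCompact (closure {x : S | (U x : EReal)
        - ENNReal.log (∫⁻ y, ENNReal.ofReal (Real.exp (U y)) ∂(K x)) ≤ (M : EReal)})
  bdd_on_cpt : ∀ C : Set S, IsCompact C → ∃ B : ℝ, ∀ x ∈ C, U x ≤ B

/-- The law of `(X_0, …, X_n)` for the Markov chain with transition kernel `K`
started at `x`. -/
def chainLaw [MeasurableSpace α] (K : α → Measure α) (x : α) : (n : ℕ) → Measure (Fin (n + 1) → α)
  | 0 => Measure.dirac (fun _ => x)
  | (n + 1) => (chainLaw K x n).bind (fun p => (K (p (Fin.last n))).map (fun y => Fin.snoc p y))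

/-- The empirical measure of a finite path. -/
def empMeas [MeasurableSpace α] {n : ℕ} (p : Fin (n + 1) → α) : Measure α :=
  ((n : ℝ≥0∞) + 1)⁻¹ • ∑ i : Fin (n + 1), Measure.dirac (p i)

lemma empMeas_isProbabilityMeasure [MeasurableSpace α] {n : ℕ} (p : Fin (n + 1) → α) :
    IsProbabilityMeasure (empMeas p) := by
  constructor
  simp only [empMeas, Measure.smul_apply, Measure.finset_sum_apply, measure_univ, smul_eq_mul]
  rw [Finset.sum_const, Finset.card_univ, Fintype.card_fin, nsmul_eq_mul, mul_one]
  rw [show ((n + 1 : ℕ) : ℝ≥0∞) = (n : ℝ≥0∞) + 1 by push_cast; ring]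
  exact ENNReal.inv_mul_cancel (by simp) (by finiteness)

/-- The empirical measure of a finite path, as a probability measure. -/
def empProb [MeasurableSpace α] {n : ℕ} (p : Fin (n + 1) → α) : ProbabilityMeasure α :=
  ⟨empMeas p, empMeas_isProbabilityMeasure p⟩

end MHLDP

namespace MHLDP

variable {α : Type*} {d : ℕ} {S : Set (EuclideanSpace ℝ (Fin d))}

/-- The `k`-step transition probabilities of the kernel `K`. -/
def kIter [MeasurableSpace α] (K : α → Measure α) : ℕ → α → Measure α
  | 0, x => Measure.dirac x
  | (n + 1), x => (kIter K n x).bind K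

/-- Ergodicity of the stationary Markov chain with initial (invariant) distribution `μ` and
transition kernel `q`: every a.s. invariant set is trivial. -/
def KernelErgodic [MeasurableSpace α] (μ : Measure α) (q : α → Measure α) : Prop :=
  Invariant μ q ∧ ∀ A : Set α, MeasurableSet A →
    (∀ᵐ x ∂μ, x ∈ A → q x A = 1) → μ A = 0 ∨ μ A = 1

/-- The set `S₊ = {x ∈ S : π(x) > 0}`. -/
def Splus (πd : S → ℝ) : Set S := {x | 0 < πd x}

/-- The modulus `Δ_ε(x)` of the ball-smoothing construction. -/
def Delta (πd : S → ℝ) (Jd : S → S → ℝ) (ε : ℝ) (x : S) : ℝ :=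
  sSup {t : ℝ | ∀ y z : S, dist y x < t → dist z x < t →
    |Real.log (accDens πd Jd x x) - Real.log (accDens πd Jd y z)| < ε ∧
    |Real.log (rej πd Jd x) - Real.log (rej πd Jd y)| < ε}

/-- The random radius `ϱ^n` of the ball-smoothing construction, given the sample points `Y`. -/
def rad (πd : S → ℝ) (Jd : S → S → ℝ) (n : ℕ) (Y : ℕ → S) : ℝ :=
  sInf ({1 / (n : ℝ)}
    ∪ (Set.range fun i : Fin n => Delta πd Jd (1 / (n : ℝ)) (Y (i : ℕ)))
    ∪ {t : ℝ | ∃ i j : Fin n, Y (i : ℕ) ≠ Y (j : ℕ) ∧ t = dist (Y (i : ℕ)) (Y (j : ℕ)) / 2}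
    ∪ (Set.range fun i : Fin n =>
        Metric.infDist ((Y (i : ℕ) : EuclideanSpace ℝ (Fin d))) (frontier S) / 2)
    ∪ (Set.range fun i : Fin n => accDens πd Jd (Y (i : ℕ)) (Y (i : ℕ))))

/-- The volume `V_n = λ(B_{ϱ^n}(0))`. -/
def Vn (πd : S → ℝ) (Jd : S → S → ℝ) (n : ℕ) (Y : ℕ → S) : ℝ≥0∞ :=
  volume (Metric.ball (0 : EuclideanSpace ℝ (Fin d)) (rad πd Jd n Y))

/-- The smoothed random measure `ν_s^n(dx) = (1/(n V_n)) Σ_{i<n} 1{x ∈ B_{ϱ^n}(Y_i)} λ(dx)`. -/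
def smooth (πd : S → ℝ) (Jd : S → S → ℝ) (n : ℕ) (Y : ℕ → S) : Measure S :=
  ((n : ℝ≥0∞) * Vn πd Jd n Y)⁻¹ •
    (leb S).withDensity (fun x =>
      ∑ i : Fin n, if dist x (Y (i : ℕ)) < rad πd Jd n Y then (1 : ℝ≥0∞) else 0)

end MHLDP

/-!
Off the diagonal, `K(x, ·)` has Lebesgue density `h(x, y) J(y|x)` with `h` the Hastings ratio,
and it has an atom of mass `r(x) = 1 - ∫ h(x, y) J(y|x) dy` at `x`. For every `y` with
`π(y) > 0`, i.e. for `λ`-a.e. `y`, `h(·, y)` is continuous: where `π(x) = 0`, the denominator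
`π(x_n) J(y|x_n)` tends to `0` while the numerator `π(y) J(x_n|y)` stays positive, so
`h(x_n, y) = 1 = h(x, y)` eventually. The proposal densities `J(·|x_n)` converge pointwise to
`J(·|x)` with integrals all equal to `1`, hence in `L¹` by Scheffé's lemma. As `0 ≤ h ≤ 1`, this
gives `∫ φ h(x_n, ·) J(·|x_n) → ∫ φ h(x, ·) J(·|x)` for every bounded `φ`; the cases `φ = f` and
`φ = 1` handle the absolutely continuous part and the atom.
-/

section Scheffe

variable {β ι : Type*} [MeasurableSpace β] {μ : Measure β} {l : Filter ι}
  [l.IsCountablyGenerated] {F : ι → β → ℝ} {f : β → ℝ}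

theorem tendsto_integral_abs_sub_of_tendsto_integral (hF0 : ∀ i, 0 ≤ᵐ[μ] F i)
    (hFi : ∀ i, Integrable (F i) μ) (hfi : Integrable f μ)
    (hlim : ∀ᵐ y ∂μ, Tendsto (F · y) l (𝓝 (f y)))
    (hint : Tendsto (fun i => ∫ y, F i y ∂μ) l (𝓝 (∫ y, f y ∂μ))) :
    Tendsto (fun i => ∫ y, |F i y - f y| ∂μ) l (𝓝 0) := by
  -- `|a| = a + 2 max (-a) 0`, and the parts `max (f - F i) 0 ≤ |f|` are dominated.
  have hsplit : ∀ i, ∫ y, |F i y - f y| ∂μ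
      = (∫ y, F i y ∂μ - ∫ y, f y ∂μ) + 2 * ∫ y, max (f y - F i y) 0 ∂μ := fun i => by
    rw [← integral_sub (hFi i) hfi, ← integral_const_mul,
      ← integral_add (f := fun y => F i y - f y) (g := fun y => 2 * max (f y - F i y) 0)
        ((hFi i).sub hfi) ((hfi.sub (hFi i)).pos_part.const_mul 2)]
    congr with y
    rcases le_total (F i y) (f y) with h | h
    · rw [abs_of_nonpos (by linarith), max_eq_left (by linarith)]; ring
    · rw [abs_of_nonneg (by linarith), max_eq_right (by linarith)]; ring
  have hneg : Tendsto (fun i => ∫ y, max (f y - F i y) 0 ∂μ) l (𝓝 0) := by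
    have := tendsto_integral_filter_of_dominated_convergence (fun y => |f y|)
      (Eventually.of_forall fun i => (hfi.sub (hFi i)).pos_part.aestronglyMeasurable)
      (Eventually.of_forall fun i => (hF0 i).mono fun y (hy : 0 ≤ F i y) => by
        rw [Real.norm_eq_abs, abs_of_nonneg (le_max_right _ _)]
        exact max_le (by simp only [Pi.sub_apply]; linarith [le_abs_self (f y)])
          (abs_nonneg _))
      hfi.abs (hlim.mono fun y hy => by
        simpa using ((tendsto_const_nhds (x := f y)).sub hy).max tendsto_const_nhds)
    simpa using this
  simpa [hsplit] using (hint.sub_const (∫ y, f y ∂μ)).add (hneg.const_mul 2)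

theorem tendsto_integral_mul_of_tendsto_integral {g : ι → β → ℝ} {g' : β → ℝ} {C : ℝ}
    (hgm : ∀ i, AEStronglyMeasurable (g i) μ) (hgC : ∀ i, ∀ᵐ y ∂μ, |g i y| ≤ C)
    (hgl : ∀ᵐ y ∂μ, Tendsto (g · y) l (𝓝 (g' y)))
    (hF0 : ∀ i, 0 ≤ᵐ[μ] F i) (hFi : ∀ i, Integrable (F i) μ) (hfi : Integrable f μ)
    (hlim : ∀ᵐ y ∂μ, Tendsto (F · y) l (𝓝 (f y)))
    (hint : Tendsto (fun i => ∫ y, F i y ∂μ) l (𝓝 (∫ y, f y ∂μ))) :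
    Tendsto (fun i => ∫ y, g i y * F i y ∂μ) l (𝓝 (∫ y, g' y * f y ∂μ)) := by
  have hmain : Tendsto (fun i => ∫ y, g i y * f y ∂μ) l (𝓝 (∫ y, g' y * f y ∂μ)) :=
    tendsto_integral_filter_of_dominated_convergence (fun y => C * |f y|)
      (Eventually.of_forall fun i => (hgm i).mul hfi.aestronglyMeasurable)
      (Eventually.of_forall fun i => (hgC i).mono fun y hy => by
        rw [Real.norm_eq_abs, abs_mul]
        exact mul_le_mul_of_nonneg_right hy (abs_nonneg _))
      (hfi.abs.const_mul C) (hgl.mono fun y hy => hy.mul_const (f y))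
  have herr : Tendsto (fun i => ∫ y, g i y * (F i y - f y) ∂μ) l (𝓝 0) := by
    refine squeeze_zero_norm (fun i => norm_integral_le_of_norm_le
      (((hFi i).sub hfi).abs.const_mul C) ((hgC i).mono fun y hy => ?_)) ?_
    · rw [Real.norm_eq_abs, abs_mul]
      exact mul_le_mul_of_nonneg_right hy (abs_nonneg _)
    · simpa [integral_const_mul] using
        (tendsto_integral_abs_sub_of_tendsto_integral hF0 hFi hfi hlim hint).const_mul C
  have hsplit : ∀ i, ∫ y, g i y * F i y ∂μ
      = ∫ y, g i y * f y ∂μ + ∫ y, g i y * (F i y - f y) ∂μ := fun i => by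
    rw [← integral_add (f := fun y => g i y * f y) (g := fun y => g i y * (F i y - f y))
      (hfi.bdd_mul (hgm i) (hgC i)) (((hFi i).sub hfi).bdd_mul (hgm i) (hgC i))]
    congr with y; ring
  simpa [hsplit] using hmain.add herr

end Scheffe

theorem ae_withDensity_ofReal_pos {β : Type*} [MeasurableSpace β] {μ : Measure β}
    {p : β → ℝ} (hp : Measurable p) :
    ∀ᵐ x ∂μ.withDensity (fun x => ENNReal.ofReal (p x)), 0 < p x :=
  (ae_withDensity_iff hp.ennreal_ofReal).2 <|
    ae_of_all _ fun _ hx => ENNReal.ofReal_pos.1 (pos_iff_ne_zero.2 hx)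

theorem tendsto_ite_eq_zero_min_one_div {ι : Type*} {l : Filter ι} {N D : ι → ℝ} {n d : ℝ}
    (hN : Tendsto N l (𝓝 n)) (hD : Tendsto D l (𝓝 d)) (hD0 : ∀ᶠ i in l, 0 ≤ D i)
    (hn : d = 0 → 0 < n) :
    Tendsto (fun i => if D i = 0 then 1 else min 1 (N i / D i)) l
      (𝓝 (if d = 0 then 1 else min 1 (n / d))) := by
  by_cases hd : d = 0
  · -- once `D i < N i`, the ratio exceeds `1`, so the value is `1` whether or not `D i = 0`
    have hlt : ∀ᶠ i in l, D i < N i := hD.eventually_lt hN (by rw [hd]; exact hn hd)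
    rw [if_pos hd]
    refine tendsto_const_nhds.congr' ?_
    filter_upwards [hlt, hD0] with i hlt hD0
    split_ifs with h
    · rfl
    · exact (min_eq_left ((one_le_div (lt_of_le_of_ne hD0 (Ne.symm h))).2 hlt.le)).symm
  · rw [if_neg hd]
    refine (tendsto_const_nhds.min (hN.div hD hd)).congr' ?_
    filter_upwards [hD.eventually_ne hd] with i hi
    rw [if_neg hi, Pi.div_apply]

namespace MHLDP

variable {d : ℕ} {S : Set (EuclideanSpace ℝ (Fin d))} {πd : S → ℝ} {Jd : S → S → ℝ}
  {π : Measure S}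

lemma hastingsRatio_nonneg (hπ : ∀ z, 0 ≤ πd z) (hJ : ∀ z w, 0 ≤ Jd z w) (x y : S) :
    0 ≤ hastingsRatio πd Jd x y := by
  unfold hastingsRatio
  split_ifs
  · exact zero_le_one
  · exact le_min zero_le_one
      (div_nonneg (mul_nonneg (hπ y) (hJ y x)) (mul_nonneg (hπ x) (hJ x y)))

lemma hastingsRatio_le_one (x y : S) : hastingsRatio πd Jd x y ≤ 1 := by
  unfold hastingsRatio
  split_ifs
  · exact le_rfl
  · exact min_le_left _ _

lemma measurable_hastingsRatio (hπ : Continuous πd)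
    (hJ : Continuous fun p : S × S => Jd p.1 p.2) (x : S) :
    Measurable (hastingsRatio πd Jd x) := by
  have hJm : Measurable fun p : S × S => Jd p.1 p.2 := hJ.measurable
  unfold hastingsRatio
  exact Measurable.ite (measurableSet_eq_fun (by fun_prop) measurable_const) measurable_const
    (by fun_prop)

lemma tendsto_hastingsRatio (hπ : Continuous πd) (hπ0 : ∀ z, 0 ≤ πd z)
    (hJ : Continuous fun p : S × S => Jd p.1 p.2) (hJpos : ∀ z w, 0 < Jd z w)
    {ι : Type*} {l : Filter ι} {g : ι → S} {x : S} (hg : Tendsto g l (𝓝 x)) {y : S}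
    (hy : 0 < πd y) :
    Tendsto (fun i => hastingsRatio πd Jd (g i) y) l (𝓝 (hastingsRatio πd Jd x y)) := by
  have hN : Continuous fun z => πd y * Jd y z := by fun_prop
  have hD : Continuous fun z => πd z * Jd z y := by fun_prop
  exact tendsto_ite_eq_zero_min_one_div ((hN.tendsto x).comp hg) ((hD.tendsto x).comp hg)
    (Eventually.of_forall fun i => mul_nonneg (hπ0 _) (hJpos _ _).le)
    fun _ => mul_pos hy (hJpos y x)

namespace Assumptions

lemma ae_pos (hA : Assumptions πd Jd π) : ∀ᵐ y ∂leb S, 0 < πd y :=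
  hA.leb_ac.ae_le (hA.pi_dens ▸ ae_withDensity_ofReal_pos hA.pi_cont.measurable)

lemma continuous_J_left (hA : Assumptions πd Jd π) (y : S) : Continuous fun z => Jd z y := by
  have := hA.J_cont; fun_prop

lemma measurable_J (hA : Assumptions πd Jd π) (z : S) : Measurable (Jd z) := by
  have := hA.J_cont; fun_prop

lemma measurable_accDens (hA : Assumptions πd Jd π) (z : S) :
    Measurable (accDens πd Jd z) :=
  (measurable_hastingsRatio hA.pi_cont hA.J_cont z).mul (hA.measurable_J z)

lemma accDens_nonneg (hA : Assumptions πd Jd π) (z y : S) : 0 ≤ accDens πd Jd z y :=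
  mul_nonneg (hastingsRatio_nonneg hA.pi_nonneg hA.J_nonneg z y) (hA.J_nonneg z y)

lemma accDens_le_J (hA : Assumptions πd Jd π) (z y : S) : accDens πd Jd z y ≤ Jd z y :=
  mul_le_of_le_one_left (hA.J_nonneg z y) (hastingsRatio_le_one z y)

lemma lintegral_J (hA : Assumptions πd Jd π) (z : S) :
    ∫⁻ y, ENNReal.ofReal (Jd z y) ∂leb S = 1 := by
  simpa [withDensity_apply _ MeasurableSet.univ] using (hA.J_dens_prob z).measure_univ

lemma integrable_J (hA : Assumptions πd Jd π) (z : S) : Integrable (Jd z) (leb S) :=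
  ⟨(hA.measurable_J z).aestronglyMeasurable, by
    rw [hasFiniteIntegral_iff_ofReal (ae_of_all _ (hA.J_nonneg z)), hA.lintegral_J z]
    exact ENNReal.one_lt_top⟩

lemma integral_J (hA : Assumptions πd Jd π) (z : S) : ∫ y, Jd z y ∂leb S = 1 := by
  rw [integral_eq_lintegral_of_nonneg_ae (ae_of_all _ (hA.J_nonneg z))
    (hA.measurable_J z).aestronglyMeasurable, hA.lintegral_J z, ENNReal.toReal_one]

lemma acc_univ_le_one (hA : Assumptions πd Jd π) (z : S) : acc πd Jd z univ ≤ 1 := by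
  rw [acc, withDensity_apply _ MeasurableSet.univ, Measure.restrict_univ, ← hA.lintegral_J z]
  exact lintegral_mono fun y => ENNReal.ofReal_le_ofReal (hA.accDens_le_J z y)

lemma isFiniteMeasure_acc (hA : Assumptions πd Jd π) (z : S) :
    IsFiniteMeasure (acc πd Jd z) :=
  ⟨(hA.acc_univ_le_one z).trans_lt ENNReal.one_lt_top⟩

lemma integral_acc (hA : Assumptions πd Jd π) (z : S) (φ : S → ℝ) :
    ∫ y, φ y ∂acc πd Jd z = ∫ y, accDens πd Jd z y * φ y ∂leb S := by
  rw [acc, integral_withDensity_eq_integral_toReal_smul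
    (hA.measurable_accDens z).ennreal_ofReal (ae_of_all _ fun _ => ENNReal.ofReal_lt_top)]
  simp only [ENNReal.toReal_ofReal (hA.accDens_nonneg z _), smul_eq_mul]

lemma rej_eq (hA : Assumptions πd Jd π) (z : S) :
    rej πd Jd z = 1 - ∫ y, accDens πd Jd z y ∂leb S := by
  have h := hA.integral_acc z fun _ => 1
  simp only [integral_const, smul_eq_mul, mul_one, measureReal_def] at h
  rw [rej, h]

lemma rej_nonneg (hA : Assumptions πd Jd π) (z : S) : 0 ≤ rej πd Jd z :=
  sub_nonneg.2 <|
    ENNReal.toReal_le_of_le_ofReal zero_le_one (by simpa using hA.acc_univ_le_one z)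

lemma integral_mhK (hA : Assumptions πd Jd π) (z : S) {φ : S → ℝ} (hφ : Measurable φ)
    {C : ℝ} (hφC : ∀ y, |φ y| ≤ C) :
    ∫ y, φ y ∂mhK πd Jd z = ∫ y, accDens πd Jd z y * φ y ∂leb S + rej πd Jd z * φ z := by
  have := hA.isFiniteMeasure_acc z
  have hacc : Integrable φ (acc πd Jd z) :=
    .of_bound hφ.aestronglyMeasurable C (ae_of_all _ hφC)
  have hdirac : Integrable φ (ENNReal.ofReal (rej πd Jd z) • Measure.dirac z) :=
    (integrable_dirac' hφ.stronglyMeasurable (by simp)).smul_measure ENNReal.ofReal_ne_top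
  rw [mhK, integral_add_measure hacc hdirac, hA.integral_acc, integral_smul_measure,
    integral_dirac' _ _ hφ.stronglyMeasurable, ENNReal.toReal_ofReal (hA.rej_nonneg z),
    smul_eq_mul]

lemma tendsto_integral_accDens_mul (hA : Assumptions πd Jd π) {ι : Type*} {l : Filter ι}
    [l.IsCountablyGenerated] {g : ι → S} {x : S} (hg : Tendsto g l (𝓝 x)) {φ : S → ℝ}
    (hφ : Measurable φ) {C : ℝ} (hφC : ∀ y, |φ y| ≤ C) :
    Tendsto (fun i => ∫ y, accDens πd Jd (g i) y * φ y ∂leb S) l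
      (𝓝 (∫ y, accDens πd Jd x y * φ y ∂leb S)) := by
  have hratio : ∀ᵐ y ∂leb S, Tendsto (fun i => hastingsRatio πd Jd (g i) y * φ y) l
      (𝓝 (hastingsRatio πd Jd x y * φ y)) :=
    hA.ae_pos.mono fun y hy => (tendsto_hastingsRatio hA.pi_cont hA.pi_nonneg hA.J_cont
      hA.J_pos hg hy).mul_const (φ y)
  have hbound : ∀ i, ∀ᵐ y ∂leb S, |hastingsRatio πd Jd (g i) y * φ y| ≤ C := fun i =>
    ae_of_all _ fun y => by
      have hratio_abs : |hastingsRatio πd Jd (g i) y| ≤ 1 := abs_le.2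
        ⟨by linarith [hastingsRatio_nonneg hA.pi_nonneg hA.J_nonneg (g i) y],
          hastingsRatio_le_one _ _⟩
      rw [abs_mul]
      exact (mul_le_of_le_one_left (abs_nonneg _) hratio_abs).trans (hφC y)
  have key := tendsto_integral_mul_of_tendsto_integral
    (g := fun i y => hastingsRatio πd Jd (g i) y * φ y)
    (fun i => ((measurable_hastingsRatio hA.pi_cont hA.J_cont (g i)).mul hφ).aestronglyMeasurable)
    hbound hratio (fun i => ae_of_all _ (hA.J_nonneg (g i))) (fun i => hA.integrable_J (g i))
    (hA.integrable_J x) (ae_of_all _ fun y => (hA.continuous_J_left y).tendsto x |>.comp hg)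
    (by simp only [hA.integral_J]; exact tendsto_const_nhds)
  have hrw : ∀ z y, accDens πd Jd z y * φ y = hastingsRatio πd Jd z y * φ y * Jd z y :=
    fun z y => by rw [accDens]; ring
  simpa only [hrw] using key

end Assumptions

/-- **Feller property of the Metropolis–Hastings kernel.** Under Assumptions (A.1)–(A.2),
if `x_n → x` in `S` then `K(x_n, ·) ⇒ K(x, ·)`: for every bounded continuous `f : S → ℝ`,
`∫ f dK(x_n,·) → ∫ f dK(x,·)`. -/
theorem mh_kernel_feller
    {d : ℕ} {S : Set (EuclideanSpace ℝ (Fin d))}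
    (πd : S → ℝ) (Jd : S → S → ℝ) (π : Measure S) (hA : Assumptions πd Jd π)
    (xseq : ℕ → S) (x : S) (hx : Filter.Tendsto xseq Filter.atTop (nhds x))
    (f : S → ℝ) (hfc : Continuous f) (hfb : ∃ C : ℝ, ∀ y, |f y| ≤ C) :
    Filter.Tendsto (fun n => ∫ y, f y ∂(mhK πd Jd (xseq n))) Filter.atTop
      (nhds (∫ y, f y ∂(mhK πd Jd x))) := by
  obtain ⟨C, hC⟩ := hfb
  simp only [hA.integral_mhK _ hfc.measurable hC, hA.rej_eq]
  have hmass := hA.tendsto_integral_accDens_mul hx (φ := fun _ => 1) measurable_const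
    (C := 1) fun _ => by simp
  simp only [mul_one] at hmass
  exact (hA.tendsto_integral_accDens_mul hx hfc.measurable hC).add
    ((tendsto_const_nhds.sub hmass).mul ((hfc.tendsto x).comp hx))

end MHLDP
end
end

section
/- Let ν ∈ P(S) satisfy I(ν) < ∞ and write its Lebesgue decomposition ν = (1−p)·ν_λ + p·ν_s with p ∈ [0,1], ν_λ, ν_s ∈ P(S), ν_λ ≪ λ and ν_s ⊥ λ. Then the rate function decomposes as I(ν) = (1−p)·I(ν_λ) + p·I(ν_s). -/
open MeasureTheory ProbabilityTheory Filter Set Metric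
open scoped ENNReal NNReal Topology

noncomputable section

/-!
The singular part `ν_s` lives on a Lebesgue-null set `N`, which `K(x, ·)` charges only through
its atom at `x`. Gluing kernels admissible for `ν_λ` (used off `N`) and for `ν_s` (used on `N`)
gives `I(ν) ≤ (1-p) I(ν_λ) + p I(ν_s)`. Conversely, a kernel `q` of finite cost for `ν` has
`q(x, ·) ≪ K(x, ·)` for `ν`-a.e. `x`, so inside `N` it can only stay put; since invariance
preserves `ν(N)`, no mass may leave `N` either, which forces `q(x, ·) = δ_x` for `ν_s`-a.e. `x`.
Thus `q` is invariant for `ν_s`, hence also for `ν_λ`, and its cost splits as required.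
-/

namespace MHLDP

section RateFunction

variable {α : Type*} [MeasurableSpace α] {μ : Measure α} {q : α → Measure α}

lemma relEnt_eq_top_of_not_absolutelyContinuous {μ ν : Measure α} (h : ¬ μ ≪ ν) :
    relEnt μ ν = ⊤ := by
  rw [relEnt, if_neg fun hc => h hc.1]

lemma Invariant.of_smul {c : ℝ≥0∞} (hc₀ : c ≠ 0) (hc : c ≠ ⊤) (h : Invariant (c • μ) q) :
    Invariant μ q := fun A hA => by
  have hA' := h A hA
  rw [Measure.smul_apply, lintegral_smul_measure, smul_eq_mul, smul_eq_mul] at hA'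
  exact (ENNReal.mul_right_inj hc₀ hc).mp hA'

lemma Invariant.of_add_right {ρ : Measure α} [IsFiniteMeasure ρ] (h : Invariant (μ + ρ) q)
    (hρ : Invariant ρ q) : Invariant μ q := fun A hA => by
  have hA' := h A hA
  rw [Measure.add_apply, lintegral_add_measure, ← hρ A hA] at hA'
  exact (ENNReal.add_left_inj (measure_ne_top ρ A)).mp hA'

lemma invariant_of_ae_eq_dirac (h : ∀ᵐ x ∂μ, q x = Measure.dirac x) : Invariant μ q :=
  fun A hA => by
  rw [lintegral_congr_ae (h.mono fun x hx => by rw [hx])]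
  simp_rw [Measure.dirac_apply' _ hA]
  exact (lintegral_indicator_one hA).symm

lemma rateI_eq_iInf (K : α → Measure α) (μ : Measure α) :
    rateI K μ = ⨅ q : {q : Kernel α α // IsMarkovKernel q ∧ Invariant μ (fun x => q x)},
      ∫⁻ x, relEnt (q.1 x) (K x) ∂μ := by
  simp only [rateI, iInf_subtype, iInf_and]

instance instNonemptyMarkovInvariant (μ : Measure α) :
    Nonempty {q : Kernel α α // IsMarkovKernel q ∧ Invariant μ (fun x => q x)} :=
  ⟨⟨Kernel.id, inferInstance, invariant_of_ae_eq_dirac (ae_of_all _ Kernel.id_apply)⟩⟩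

variable {K : α → Measure α}

lemma rateI_le_lintegral (κ : Kernel α α) [IsMarkovKernel κ] (h : Invariant μ (fun x => κ x)) :
    rateI K μ ≤ ∫⁻ x, relEnt (κ x) (K x) ∂μ :=
  iInf₂_le_of_le κ ‹_› (iInf_le _ h)

lemma mul_rateI_le (κ : Kernel α α) [IsMarkovKernel κ] {c : ℝ≥0∞} (hc : c ≠ ⊤)
    (h : Invariant (c • μ) (fun x => κ x)) :
    c * rateI K μ ≤ ∫⁻ x, relEnt (κ x) (K x) ∂(c • μ) := by
  rcases eq_or_ne c 0 with rfl | hc₀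
  · simp
  rw [lintegral_smul_measure, smul_eq_mul]
  gcongr
  exact rateI_le_lintegral κ (h.of_smul hc₀ hc)

lemma lintegral_piecewise_smul_add {N : Set α} (hN : MeasurableSet N) [DecidablePred (· ∈ N)]
    {μ₁ μ₂ : Measure α} (h₁ : μ₁ N = 0) (h₂ : μ₂ Nᶜ = 0) (κ η : Kernel α α)
    (Φ : α → Measure α → ℝ≥0∞) (a b : ℝ≥0∞) :
    ∫⁻ x, Φ x (Kernel.piecewise hN η κ x) ∂(a • μ₁ + b • μ₂) =
      a * ∫⁻ x, Φ x (κ x) ∂μ₁ + b * ∫⁻ x, Φ x (η x) ∂μ₂ := by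
  have hκ : ∀ᵐ x ∂μ₁, Φ x (Kernel.piecewise hN η κ x) = Φ x (κ x) :=
    (measure_eq_zero_iff_ae_notMem.mp h₁).mono fun x hx => by
      rw [Kernel.piecewise_apply, if_neg hx]
  have hη : ∀ᵐ x ∂μ₂, Φ x (Kernel.piecewise hN η κ x) = Φ x (η x) :=
    (show ∀ᵐ x ∂μ₂, x ∈ N from mem_ae_iff.mpr h₂).mono fun x hx => by
      rw [Kernel.piecewise_apply, if_pos hx]
  rw [lintegral_add_measure, lintegral_smul_measure, lintegral_smul_measure,
    lintegral_congr_ae hκ, lintegral_congr_ae hη, smul_eq_mul, smul_eq_mul]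

lemma rateI_smul_add_le_of_mutuallySingular {μ₁ μ₂ : Measure α} (h : μ₁ ⟂ₘ μ₂) {a b : ℝ≥0∞}
    (ha : a ≠ ⊤) (hb : b ≠ ⊤) :
    rateI K (a • μ₁ + b • μ₂) ≤ a * rateI K μ₁ + b * rateI K μ₂ := by
  classical
  obtain ⟨N, hN, h₁, h₂⟩ := h
  rw [rateI_eq_iInf K μ₁, rateI_eq_iInf K μ₂, ENNReal.mul_iInf fun h => absurd h ha,
    ENNReal.mul_iInf fun h => absurd h hb, ENNReal.iInf_add]
  refine le_iInf fun κ => ?_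
  rw [ENNReal.add_iInf]
  refine le_iInf fun η => ?_
  have := κ.2.1
  have := η.2.1
  have hinv : Invariant (a • μ₁ + b • μ₂) (fun x => Kernel.piecewise hN η.1 κ.1 x) :=
    fun A hA => by
    rw [lintegral_piecewise_smul_add hN h₁ h₂ κ η (fun _ m => m A), ← κ.2.2 A hA,
      ← η.2.2 A hA]
    rfl
  exact (rateI_le_lintegral _ hinv).trans_eq
    (lintegral_piecewise_smul_add hN h₁ h₂ κ η (fun x m => relEnt m (K x)) a b)

lemma measure_eq_zero_of_lintegral_ne_top {f : α → ℝ≥0∞} {W : Set α} (hW : MeasurableSet W)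
    (hf : ∀ x ∈ W, f x = ⊤) (h : ∫⁻ x, f x ∂μ ≠ ⊤) : μ W = 0 := by
  by_contra hW₀
  refine h (eq_top_iff.mpr ?_)
  calc ⊤ = ∫⁻ _ in W, ⊤ ∂μ := by rw [setLIntegral_const, ENNReal.top_mul hW₀]
    _ = ∫⁻ x in W, f x ∂μ := setLIntegral_congr_fun hW fun x hx => (hf x hx).symm
    _ ≤ ∫⁻ x, f x ∂μ := setLIntegral_le_lintegral W f

variable [MeasurableEq α]

lemma measurable_kernel_diff_singleton (κ : Kernel α α) [IsSFiniteKernel κ] {N : Set α}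
    (hN : MeasurableSet N) : Measurable fun x => κ x (N \ {x}) := by
  have hpre : ∀ x, Prod.mk x ⁻¹' (Prod.snd ⁻¹' N \ diagonal α) = N \ {x} := fun x => by
    ext y
    simp [eq_comm]
  simpa only [hpre] using
    Kernel.measurable_kernel_prodMk_left (κ := κ) ((measurable_snd hN).diff measurableSet_diagonal)

lemma ae_kernel_diff_singleton_eq_zero {N : Set α} (hN : MeasurableSet N)
    (hK : ∀ x, K x (N \ {x}) = 0) (κ : Kernel α α) [IsSFiniteKernel κ]
    (hcost : ∫⁻ x, relEnt (κ x) (K x) ∂μ ≠ ⊤) : ∀ᵐ x ∂μ, κ x (N \ {x}) = 0 :=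
  ae_iff.mpr <| measure_eq_zero_of_lintegral_ne_top
    (measurable_kernel_diff_singleton κ hN (measurableSet_singleton 0).compl)
    (fun x hx => relEnt_eq_top_of_not_absolutelyContinuous fun hac => hx (hac (hK x))) hcost

lemma eq_dirac_of_measure_singleton_eq_one {m : Measure α} [IsProbabilityMeasure m] {x : α}
    (h : m {x} = 1) : m = Measure.dirac x := by
  have hae : ∀ᵐ y ∂m, y ∈ ({x} : Set α) :=
    ae_iff.mpr ((prob_compl_eq_zero_iff (measurableSet_singleton x)).mpr h)
  rw [← Measure.restrict_eq_self_of_ae_mem hae, Measure.restrict_singleton, h, one_smul]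

lemma ae_eq_dirac_of_invariant (κ : Kernel α α) [IsMarkovKernel κ] {N : Set α}
    (hN : MeasurableSet N) (hμN : μ N ≠ ⊤) (hκ : Invariant μ (fun x => κ x))
    (hstay : ∀ᵐ x ∂μ, κ x (N \ {x}) = 0) : ∀ᵐ x ∂μ, x ∈ N → κ x = Measure.dirac x := by
  have hκN : ∀ᵐ x ∂μ, κ x N = N.indicator (fun x => κ x {x}) x := by
    filter_upwards [hstay] with x hx
    rw [← measure_inter_add_sdiff (μ := κ x) N (measurableSet_singleton x), hx, add_zero]
    by_cases hxN : x ∈ N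
    · rw [Set.indicator_of_mem hxN, Set.inter_eq_right.mpr (Set.singleton_subset_iff.mpr hxN)]
    · rw [Set.indicator_of_notMem hxN, Set.inter_singleton_eq_empty.mpr hxN, measure_empty]
  have hmass : ∫⁻ x in N, κ x {x} ∂μ = μ N := by
    rw [hκ N hN, lintegral_congr_ae hκN, lintegral_indicator hN]
  have hone : (fun x => κ x {x}) =ᵐ[μ.restrict N] 1 :=
    ae_eq_of_ae_le_of_lintegral_le (ae_of_all _ fun x => prob_le_one) (hmass ▸ hμN)
      aemeasurable_const (by simp [hmass])
  filter_upwards [(ae_restrict_iff' hN).mp hone] with x hx hxN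
  exact eq_dirac_of_measure_singleton_eq_one (hx hxN)

lemma smul_add_rateI_le {N : Set α} (hN : MeasurableSet N) (hK : ∀ x, K x (N \ {x}) = 0)
    {μ₁ μ₂ : Measure α} [IsFiniteMeasure μ₂] (h₁ : μ₁ N = 0) (h₂ : μ₂ Nᶜ = 0) {a b : ℝ≥0∞}
    (ha : a ≠ ⊤) (hb : b ≠ ⊤) :
    a * rateI K μ₁ + b * rateI K μ₂ ≤ rateI K (a • μ₁ + b • μ₂) := by
  refine le_iInf fun κ => le_iInf fun _ => le_iInf fun hκ => ?_
  rcases eq_or_ne (∫⁻ x, relEnt (κ x) (K x) ∂(a • μ₁ + b • μ₂)) ⊤ with htop | hcost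
  · exact htop ▸ le_top
  have hνN : (a • μ₁ + b • μ₂) N ≠ ⊤ := by
    simpa [h₁] using ENNReal.mul_ne_top hb (measure_ne_top μ₂ N)
  have hstay :=
    ae_eq_dirac_of_invariant κ hN hνN hκ (ae_kernel_diff_singleton_eq_zero hN hK κ hcost)
  have hmem : ∀ᵐ x ∂(b • μ₂), x ∈ N :=
    Measure.smul_absolutelyContinuous.ae_le (mem_ae_iff.mpr h₂)
  have hinv₂ : Invariant (b • μ₂) (fun x => κ x) := invariant_of_ae_eq_dirac <| by
    filter_upwards [(Measure.absolutelyContinuous_of_le (Measure.le_add_left le_rfl)).ae_le hstay,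
      hmem] with x hx hxN using hx hxN
  have := μ₂.smul_finite hb
  rw [lintegral_add_measure]
  exact add_le_add (mul_rateI_le κ ha (Invariant.of_add_right hκ hinv₂))
    (mul_rateI_le κ hb hinv₂)

end RateFunction

lemma mhK_diff_singleton_eq_zero {d : ℕ} {S : Set (EuclideanSpace ℝ (Fin d))}
    (πd : S → ℝ) (Jd : S → S → ℝ) {N : Set S} (hN : MeasurableSet N) (hleb : leb S N = 0)
    (x : S) : mhK πd Jd x (N \ {x}) = 0 := by
  have hA : MeasurableSet (N \ {x}) := hN.diff (measurableSet_singleton x)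
  have hacc : acc πd Jd x (N \ {x}) = 0 := by
    rw [acc, withDensity_apply _ hA,
      setLIntegral_measure_zero _ _ (measure_mono_null sdiff_subset hleb)]
  simp [mhK, hacc, Measure.dirac_apply' _ hA]

theorem mh_rate_function_lebesgue_decomposition_general
    {d : ℕ} {S : Set (EuclideanSpace ℝ (Fin d))}
    (πd : S → ℝ) (Jd : S → S → ℝ)
    (ν νlam νsing : Measure S)
    (hνsing : IsProbabilityMeasure νsing)
    (p : ℝ≥0∞) (hp : p ≤ 1)
    (hdec : ν = (1 - p) • νlam + p • νsing)
    (hlam_ac : νlam ≪ leb S) (hsing : Measure.MutuallySingular νsing (leb S)) :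
    rateI (mhK πd Jd) ν =
      (1 - p) * rateI (mhK πd Jd) νlam + p * rateI (mhK πd Jd) νsing := by
  obtain ⟨s, hs, hνsing_s, hleb_sc⟩ := hsing
  have hνlam_sc : νlam sᶜ = 0 := hlam_ac hleb_sc
  have hνsing_sc : νsing sᶜᶜ = 0 := by rwa [compl_compl]
  have h1p : 1 - p ≠ ⊤ := ENNReal.sub_ne_top ENNReal.one_ne_top
  have hp' : p ≠ ⊤ := ne_top_of_le_ne_top ENNReal.one_ne_top hp
  subst hdec
  exact le_antisymm
    (rateI_smul_add_le_of_mutuallySingular ⟨sᶜ, hs.compl, hνlam_sc, hνsing_sc⟩ h1p hp')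
    (smul_add_rateI_le hs.compl (mhK_diff_singleton_eq_zero πd Jd hs.compl hleb_sc) hνlam_sc
      hνsing_sc h1p hp')

/-- **Lemma 4.4(b).** Let `ν = (1−p)·ν_λ + p·ν_s` be the Lebesgue decomposition of a
measure with `I(ν) < ∞`. Then the rate function decomposes as
`I(ν) = (1−p)·I(ν_λ) + p·I(ν_s)`. -/
theorem mh_rate_function_lebesgue_decomposition
    {d : ℕ} {S : Set (EuclideanSpace ℝ (Fin d))}
    (πd : S → ℝ) (Jd : S → S → ℝ) (π : Measure S) (hA : Assumptions πd Jd π)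
    (ν νlam νsing : Measure S) (hν : IsProbabilityMeasure ν)
    (hνlam : IsProbabilityMeasure νlam) (hνsing : IsProbabilityMeasure νsing)
    (p : ℝ≥0∞) (hp : p ≤ 1)
    (hdec : ν = (1 - p) • νlam + p • νsing)
    (hlam_ac : νlam ≪ leb S) (hsing : Measure.MutuallySingular νsing (leb S))
    (hfin : rateI (mhK πd Jd) ν ≠ ⊤) :
    rateI (mhK πd Jd) ν =
      (1 - p) * rateI (mhK πd Jd) νlam + p * rateI (mhK πd Jd) νsing :=
  mh_rate_function_lebesgue_decomposition_general πd Jd ν νlam νsing hνsing p hp hdec hlam_ac hsing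

end MHLDP
end
end

section
/- Let x ∈ S be such that r(x) > 0, and let ζ ∈ S with ζ ≠ x. Then the i-step Metropolis–Hastings transition probabilities satisfy K^{(i)}(x, {x}) ≥ r(x)^i > 0 for all i ≥ 1, while K^{(j)}(ζ, {x}) = 0 for all j ≥ 1. Consequently, for any positive integers l₀, n₀, the measure Σ_{i ≥ l₀} 2^{−i} K^{(i)}(x, ·) is not absolutely continuous with respect to Σ_{j ≥ n₀} 2^{−j} K^{(j)}(ζ, ·); i.e., the Donsker–Varadhan-type transitivity condition fails for K. -/
open MeasureTheory ProbabilityTheory Filter Set Metric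
open scoped ENNReal NNReal Topology

noncomputable section

/-!
Off the diagonal the Metropolis–Hastings kernel has a Lebesgue density, so it never hits a
prescribed point: `K(y, {x}) = 0` for `y ≠ x`.  Hence a chain started at `ζ ≠ x` never visits
`x`, while a chain started at `x` stays there for `i` steps with probability at least `r(x)^i`.
The atom `{x}` therefore separates the two averaged kernels.
-/

namespace MHLDP

section IteratedKernel

variable {α : Type*} [MeasurableSpace α] {K : α → Measure α}

lemma kIter_succ_apply (hK : Measurable K) (n : ℕ) (y : α) {A : Set α} (hA : MeasurableSet A) :
    kIter K (n + 1) y A = ∫⁻ z, K z A ∂kIter K n y :=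
  Measure.bind_apply hA hK.aemeasurable

variable [MeasurableSingletonClass α]

lemma pow_le_kIter_apply_singleton (hK : Measurable K) {x : α} {c : ℝ≥0∞}
    (hc : c ≤ K x {x}) (n : ℕ) : c ^ n ≤ kIter K n x {x} := by
  induction n with
  | zero => simp [kIter]
  | succ n ih =>
    have hle : ∀ z, ({x} : Set α).indicator (fun _ => c) z ≤ K z {x} := by
      intro z
      by_cases hz : z = x
      · subst hz; simpa using hc
      · simp [hz]
    calc c ^ (n + 1) = c * c ^ n := pow_succ' c n
      _ ≤ c * kIter K n x {x} := by gcongr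
      _ = ∫⁻ z, ({x} : Set α).indicator (fun _ => c) z ∂kIter K n x := by
        rw [lintegral_indicator_const (measurableSet_singleton x)]
      _ ≤ kIter K (n + 1) x {x} := by
        rw [kIter_succ_apply hK n x (measurableSet_singleton x)]
        exact lintegral_mono hle

lemma kIter_apply_singleton_eq_zero (hK : Measurable K) {x ζ : α}
    (hKx : ∀ y, y ≠ x → K y {x} = 0) (hζ : ζ ≠ x) (n : ℕ) : kIter K n ζ {x} = 0 := by
  induction n with
  | zero => simpa [kIter] using hζ
  | succ n ih =>
    have hae : ∀ᵐ z ∂kIter K n ζ, z ≠ x := measure_eq_zero_iff_ae_notMem.1 ih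
    rw [kIter_succ_apply hK n ζ (measurableSet_singleton x)]
    exact (lintegral_congr_ae (hae.mono hKx)).trans lintegral_zero

end IteratedKernel

variable {d : ℕ} {S : Set (EuclideanSpace ℝ (Fin d))}

lemma sigmaFinite_leb (hS : MeasurableSet S) : SigmaFinite (leb S) :=
  SigmaFinite.of_map _ measurable_subtype_coe.aemeasurable
    (by rw [leb, map_comap_subtype_coe hS]; infer_instance)

lemma leb_singleton [Nontrivial (EuclideanSpace ℝ (Fin d))] (hS : MeasurableSet S) (x : S) :
    leb S {x} = 0 := by
  rw [leb, comap_subtype_coe_apply hS, Set.image_singleton]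
  exact measure_singleton _

variable {πd : S → ℝ} {Jd : S → S → ℝ}

lemma measurable_accDens (hπ : Continuous πd) (hJ : Continuous fun p : S × S => Jd p.1 p.2) :
    Measurable fun p : S × S => accDens πd Jd p.1 p.2 := by
  have hJm : Measurable fun p : S × S => Jd p.1 p.2 := hJ.measurable
  have hJm' : Measurable fun p : S × S => Jd p.2 p.1 := (hJ.comp continuous_swap).measurable
  have hπ1 : Measurable fun p : S × S => πd p.1 := (hπ.comp continuous_fst).measurable
  have hπ2 : Measurable fun p : S × S => πd p.2 := (hπ.comp continuous_snd).measurable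
  exact (Measurable.ite (measurableSet_eq_fun (hπ1.mul hJm) measurable_const)
    measurable_const (measurable_const.min ((hπ2.mul hJm').div (hπ1.mul hJm)))).mul hJm

lemma measurable_acc_apply (hS : MeasurableSet S) (hπ : Continuous πd)
    (hJ : Continuous fun p : S × S => Jd p.1 p.2) {A : Set S} (hA : MeasurableSet A) :
    Measurable fun y => acc πd Jd y A := by
  have := sigmaFinite_leb hS
  simp_rw [acc, withDensity_apply _ hA, ← lintegral_indicator hA]
  exact Measurable.lintegral_prod_right'
    ((measurable_accDens hπ hJ).ennreal_ofReal.indicator (measurable_snd hA))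

lemma measurable_mhK (hS : MeasurableSet S) (hπ : Continuous πd)
    (hJ : Continuous fun p : S × S => Jd p.1 p.2) :
    Measurable (mhK πd Jd) := by
  refine Measure.measurable_of_measurable_coe _ fun A hA => ?_
  have hrej : Measurable (rej πd Jd) :=
    measurable_const.sub (measurable_acc_apply hS hπ hJ MeasurableSet.univ).ennreal_toReal
  simp only [mhK, Measure.coe_add, Pi.add_apply, Measure.smul_apply, smul_eq_mul,
    Measure.dirac_apply' _ hA]
  exact (measurable_acc_apply hS hπ hJ hA).add
    (hrej.ennreal_ofReal.mul (measurable_one.indicator hA))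

lemma ofReal_rej_le_mhK_apply_self (x : S) :
    ENNReal.ofReal (rej πd Jd x) ≤ mhK πd Jd x {x} := by
  simp [mhK]

lemma mhK_apply_singleton_of_ne [Nontrivial (EuclideanSpace ℝ (Fin d))]
    (hS : MeasurableSet S) {x y : S} (hyx : y ≠ x) : mhK πd Jd y {x} = 0 := by
  have hacc : acc πd Jd y {x} = 0 := withDensity_absolutelyContinuous _ _ (leb_singleton hS x)
  simp [mhK, hacc, hyx]

/-- **Failure of the Donsker–Varadhan transitivity condition.** If `r(x) > 0` and
`ζ ≠ x`, then `K^{(i)}(x,{x}) ≥ r(x)^i > 0` for all `i ≥ 1` while `K^{(j)}(ζ,{x}) = 0`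
for all `j ≥ 1`; consequently for any positive integers `l₀, n₀` the measure
`Σ_{i≥l₀} 2^{−i} K^{(i)}(x,·)` is not absolutely continuous with respect to
`Σ_{j≥n₀} 2^{−j} K^{(j)}(ζ,·)`. -/
theorem mh_transitivity_condition_fails
    {d : ℕ} {S : Set (EuclideanSpace ℝ (Fin d))}
    (πd : S → ℝ) (Jd : S → S → ℝ) (π : Measure S) (hA : Assumptions πd Jd π)
    (x ζ : S) (hr : 0 < rej πd Jd x) (hne : ζ ≠ x) :
    (∀ i : ℕ, 1 ≤ i →
      ENNReal.ofReal (rej πd Jd x ^ i) ≤ kIter (mhK πd Jd) i x {x} ∧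
      0 < kIter (mhK πd Jd) i x {x}) ∧
    (∀ j : ℕ, 1 ≤ j → kIter (mhK πd Jd) j ζ {x} = 0) ∧
    (∀ l₀ n₀ : ℕ, 1 ≤ l₀ → 1 ≤ n₀ →
      ¬ (Measure.sum (fun i : ℕ => ((2 : ℝ≥0∞) ^ (l₀ + i))⁻¹ • kIter (mhK πd Jd) (l₀ + i) x) ≪
          Measure.sum (fun j : ℕ =>
            ((2 : ℝ≥0∞) ^ (n₀ + j))⁻¹ • kIter (mhK πd Jd) (n₀ + j) ζ))) := by
  have : Nontrivial (EuclideanSpace ℝ (Fin d)) := nontrivial_of_ne _ _ (Subtype.coe_ne_coe.2 hne)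
  have hK := measurable_mhK hA.measS hA.pi_cont hA.J_cont
  have hstay (n : ℕ) : ENNReal.ofReal (rej πd Jd x ^ n) ≤ kIter (mhK πd Jd) n x {x} := by
    rw [ENNReal.ofReal_pow hr.le]
    exact pow_le_kIter_apply_singleton hK (ofReal_rej_le_mhK_apply_self x) n
  have hpos (n : ℕ) : 0 < kIter (mhK πd Jd) n x {x} :=
    (ENNReal.ofReal_pos.2 (pow_pos hr n)).trans_le (hstay n)
  have hnever (n : ℕ) : kIter (mhK πd Jd) n ζ {x} = 0 :=
    kIter_apply_singleton_eq_zero hK (fun _ hy => mhK_apply_singleton_of_ne hA.measS hy) hne n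
  refine ⟨fun i _ => ⟨hstay i, hpos i⟩, fun j _ => hnever j, fun l₀ n₀ _ _ hac => ?_⟩
  have hζ : Measure.sum (fun j : ℕ =>
      ((2 : ℝ≥0∞) ^ (n₀ + j))⁻¹ • kIter (mhK πd Jd) (n₀ + j) ζ) {x} = 0 := by
    simp [hnever]
  have hx := Measure.sum_apply_eq_zero.1 (hac hζ) 0
  simp only [Measure.smul_apply, smul_eq_mul, mul_eq_zero, ENNReal.inv_eq_zero] at hx
  exact hx.elim (ENNReal.pow_ne_top ENNReal.ofNat_ne_top) (hpos _).ne'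

end MHLDP
end
end

section
/- Under Assumptions A1 and A2: (i) for every x ∈ S₊, the acceptance part a(x,·) of the Metropolis–Hastings kernel is absolutely continuous with respect to Lebesgue measure with density a(x,y) = min{1, π(y)J(x|y)/(π(x)J(y|x))} J(y|x), and (x,y) ↦ a(x,y) is continuous and bounded on S₊ × S; (ii) the rejection probability r(x) = 1 − a(x,S) is continuous on all of S, with r(x) = 0 for x ∉ S₊; in particular, if x_n → x with π(x) = 0, then a(x_n, S) → 1 and r(x_n) → 0. -/
open MeasureTheory ProbabilityTheory Filter Set Metric
open scoped ENNReal NNReal Topology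

noncomputable section

namespace MHLDP

/-! Where `π(x) > 0` the acceptance density is an explicit continuous expression. Where
`π(x) = 0`, every proposal towards a point `y` with `π(y) > 0` is accepted, so `a(x, ·) = J(x, ·)`
and `r(x) = 0`; by continuity the same acceptance happens near `x`, hence `x ↦ a(x, y)` is
continuous for every `y` with `π(y) > 0`, i.e. for Lebesgue-a.e. `y`. Since
`0 ≤ a(x, ·) ≤ J(x, ·)` and every `J(x, ·)` has mass one, Fatou's lemma applied to `a` and to
`J - a` makes `x ↦ a(x, S)`, hence `r`, continuous. -/

theorem tendsto_lintegral_of_le_of_lintegral_eq {α ι : Type*} [MeasurableSpace α]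
    {μ : Measure α} {l : Filter ι} [l.NeBot] [l.IsCountablyGenerated]
    {f g : ι → α → ℝ≥0∞} {F G : α → ℝ≥0∞}
    (hf : ∀ i, AEMeasurable (f i) μ) (hg : ∀ i, AEMeasurable (g i) μ)
    (hF : AEMeasurable F μ) (hG : AEMeasurable G μ) (hfg : ∀ i, f i ≤ g i)
    (hf_lim : ∀ᵐ a ∂μ, Tendsto (fun i => f i a) l (𝓝 (F a)))
    (hg_lim : ∀ᵐ a ∂μ, Tendsto (fun i => g i a) l (𝓝 (G a)))
    (hg_int : ∀ i, ∫⁻ a, g i a ∂μ = ∫⁻ a, G a ∂μ) (hG_int : ∫⁻ a, G a ∂μ ≠ ∞) :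
    Tendsto (fun i => ∫⁻ a, f i a ∂μ) l (𝓝 (∫⁻ a, F a ∂μ)) := by
  set c := ∫⁻ a, G a ∂μ
  have hf_int : ∀ i, ∫⁻ a, f i a ∂μ ≤ c := fun i => (lintegral_mono (hfg i)).trans_eq (hg_int i)
  have hFG : F ≤ᵐ[μ] G := (hf_lim.and hg_lim).mono fun a h =>
    le_of_tendsto_of_tendsto' h.1 h.2 fun i => hfg i a
  have hF_int : ∫⁻ a, F a ∂μ ≠ ∞ := ne_top_of_le_ne_top hG_int (lintegral_mono_ae hFG)
  have hliminf : ∫⁻ a, F a ∂μ ≤ liminf (fun i => ∫⁻ a, f i a ∂μ) l :=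
    calc ∫⁻ a, F a ∂μ = ∫⁻ a, liminf (fun i => f i a) l ∂μ :=
          lintegral_congr_ae (hf_lim.mono fun a h => h.liminf_eq.symm)
      _ ≤ _ := lintegral_liminf_le' hf
  -- Fatou for the defects `g i - f i` bounds the limsup.
  have hdefect : c - ∫⁻ a, F a ∂μ ≤ c - limsup (fun i => ∫⁻ a, f i a ∂μ) l :=
    calc c - ∫⁻ a, F a ∂μ = ∫⁻ a, G a - F a ∂μ := (lintegral_sub' hF hF_int hFG).symm
      _ = ∫⁻ a, liminf (fun i => g i a - f i a) l ∂μ := by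
          refine lintegral_congr_ae ((hf_lim.and (hg_lim.and (ae_lt_top' hG hG_int))).mono ?_)
          rintro a ⟨hfa, hga, hGa⟩
          exact (ENNReal.Tendsto.sub hga hfa (Or.inl hGa.ne)).liminf_eq.symm
      _ ≤ liminf (fun i => ∫⁻ a, g i a - f i a ∂μ) l :=
          lintegral_liminf_le' fun i => (hg i).sub (hf i)
      _ = liminf (fun i => c - ∫⁻ a, f i a ∂μ) l := by
          congr 1; funext i
          rw [lintegral_sub' (hf i) (ne_top_of_le_ne_top hG_int (hf_int i))
            (ae_of_all _ (hfg i)), hg_int i]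
      _ = c - limsup (fun i => ∫⁻ a, f i a ∂μ) l := ENNReal.liminf_const_sub _ _ hG_int
  have hlimsup : limsup (fun i => ∫⁻ a, f i a ∂μ) l ≤ ∫⁻ a, F a ∂μ :=
    (ENNReal.sub_le_sub_iff_left (limsup_le_of_le (by isBoundedDefault)
      (Eventually.of_forall hf_int)) hG_int).1 hdefect
  exact tendsto_of_le_liminf_of_limsup_le hliminf hlimsup

variable {d : ℕ} {S : Set (EuclideanSpace ℝ (Fin d))} {πd : S → ℝ} {Jd : S → S → ℝ}

lemma accDens_of_mul_ne_zero {x y : S} (h : πd x * Jd x y ≠ 0) :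
    accDens πd Jd x y = min 1 (πd y * Jd y x / (πd x * Jd x y)) * Jd x y := by
  rw [accDens, hastingsRatio, if_neg h]

lemma accDens_of_mul_lt (hπ : ∀ x, 0 ≤ πd x) (hJ : ∀ x y, 0 ≤ Jd x y) {x y : S}
    (h : πd x * Jd x y < πd y * Jd y x) : accDens πd Jd x y = Jd x y := by
  rcases (mul_nonneg (hπ x) (hJ x y)).eq_or_lt with h0 | hpos
  · rw [accDens, hastingsRatio, if_pos h0.symm, one_mul]
  · rw [accDens_of_mul_ne_zero hpos.ne', min_eq_left ((one_lt_div hpos).2 h).le, one_mul]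

lemma accDens_of_pi_eq_zero {x : S} (hx : πd x = 0) (y : S) : accDens πd Jd x y = Jd x y := by
  rw [accDens, hastingsRatio, if_pos (by rw [hx, zero_mul]), one_mul]

lemma accDens_le (hJ : ∀ x y, 0 ≤ Jd x y) (x y : S) : accDens πd Jd x y ≤ Jd x y := by
  refine mul_le_of_le_one_left (hJ x y) ?_
  unfold hastingsRatio
  split_ifs
  exacts [le_rfl, min_le_left _ _]

lemma continuousOn_accDens (hπ : Continuous πd) (hJ : Continuous fun p : S × S => Jd p.1 p.2)
    (hJ_pos : ∀ x y, 0 < Jd x y) :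
    ContinuousOn (fun p : S × S => accDens πd Jd p.1 p.2) (Splus πd ×ˢ univ) := by
  have hden : ∀ p ∈ Splus πd ×ˢ (univ : Set S), πd p.1 * Jd p.1 p.2 ≠ 0 :=
    fun p hp => (mul_pos hp.1 (hJ_pos p.1 p.2)).ne'
  have hratio : ContinuousOn (fun p : S × S => πd p.2 * Jd p.2 p.1 / (πd p.1 * Jd p.1 p.2))
      (Splus πd ×ˢ univ) :=
    ((hπ.comp continuous_snd).mul (hJ.comp continuous_swap)).continuousOn.div
      ((hπ.comp continuous_fst).mul hJ).continuousOn hden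
  have hformula : ContinuousOn
      (fun p : S × S => min 1 (πd p.2 * Jd p.2 p.1 / (πd p.1 * Jd p.1 p.2)) * Jd p.1 p.2)
      (Splus πd ×ˢ univ) :=
    ((continuous_const.min continuous_id).comp_continuousOn hratio).mul hJ.continuousOn
  exact hformula.congr fun p hp => accDens_of_mul_ne_zero (hden p hp)

variable {π : Measure S}

lemma Assumptions.continuous_Jd_left (hA : Assumptions πd Jd π) (y : S) :
    Continuous fun x => Jd x y :=
  hA.J_cont.comp (continuous_id.prodMk continuous_const)

lemma Assumptions.continuous_Jd_right (hA : Assumptions πd Jd π) (x : S) :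
    Continuous (Jd x) :=
  hA.J_cont.comp (continuous_const.prodMk continuous_id)

lemma Assumptions.continuousAt_accDens (hA : Assumptions πd Jd π) {x : S} (hx : 0 < πd x)
    (y : S) : ContinuousAt (fun p : S × S => accDens πd Jd p.1 p.2) (x, y) :=
  (continuousOn_accDens hA.pi_cont hA.J_cont hA.J_pos).continuousAt
    (prod_mem_nhds ((isOpen_lt continuous_const hA.pi_cont).mem_nhds hx) univ_mem)

lemma Assumptions.continuous_accDens_right (hA : Assumptions πd Jd π) (x : S) :
    Continuous (accDens πd Jd x) := by
  rcases (hA.pi_nonneg x).eq_or_lt with hx | hx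
  · exact (hA.continuous_Jd_right x).congr fun y => (accDens_of_pi_eq_zero hx.symm y).symm
  · exact continuous_iff_continuousAt.2 fun y =>
      (hA.continuousAt_accDens hx y).comp (f := fun y' => (x, y'))
        (continuousAt_const.prodMk continuousAt_id)

lemma Assumptions.continuous_accDens_left (hA : Assumptions πd Jd π) {y : S} (hy : 0 < πd y) :
    Continuous fun x => accDens πd Jd x y := by
  refine continuous_iff_continuousAt.2 fun x => ?_
  rcases (hA.pi_nonneg x).eq_or_lt with hx | hx
  · have hlt : ∀ᶠ x' in 𝓝 x, πd x' * Jd x' y < πd y * Jd y x' := by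
      refine ((hA.pi_cont.mul (hA.continuous_Jd_left y)).continuousAt).eventually_lt
        (continuous_const.mul (hA.continuous_Jd_right y)).continuousAt ?_
      show πd x * Jd x y < πd y * Jd y x
      rw [← hx, zero_mul]
      exact mul_pos hy (hA.J_pos y x)
    exact (hA.continuous_Jd_left y).continuousAt.congr
      (hlt.mono fun x' h => (accDens_of_mul_lt hA.pi_nonneg hA.J_nonneg h).symm)
  · exact (hA.continuousAt_accDens hx y).comp (f := fun x' => (x', y))
      (continuousAt_id.prodMk continuousAt_const)

lemma Assumptions.ae_pi_pos (hA : Assumptions πd Jd π) : ∀ᵐ y ∂(leb S), 0 < πd y := by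
  have hmeas : MeasurableSet {y : S | πd y = 0} :=
    hA.pi_cont.measurable (measurableSet_singleton 0)
  have hnull : π {y : S | πd y = 0} = 0 := by
    rw [hA.pi_dens, withDensity_apply _ hmeas,
      setLIntegral_congr_fun hmeas (g := fun _ => 0) fun y (hy : πd y = 0) => by simp [hy]]
    simp
  filter_upwards [measure_eq_zero_iff_ae_notMem.1 (hA.leb_ac hnull)] with y hy
  exact (hA.pi_nonneg y).lt_of_ne (Ne.symm hy)

lemma Assumptions.lintegral_Jd (hA : Assumptions πd Jd π) (x : S) :
    ∫⁻ y, ENNReal.ofReal (Jd x y) ∂(leb S) = 1 := by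
  simpa using (hA.J_dens_prob x).measure_univ

lemma acc_univ (x : S) :
    acc πd Jd x univ = ∫⁻ y, ENNReal.ofReal (accDens πd Jd x y) ∂(leb S) := by
  rw [acc, withDensity_apply _ MeasurableSet.univ, setLIntegral_univ]

lemma Assumptions.acc_univ_le_one_s13 (hA : Assumptions πd Jd π) (x : S) : acc πd Jd x univ ≤ 1 := by
  rw [acc_univ, ← hA.lintegral_Jd x]
  exact lintegral_mono fun y => ENNReal.ofReal_le_ofReal (accDens_le hA.J_nonneg x y)

lemma Assumptions.continuous_acc_univ (hA : Assumptions πd Jd π) :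
    Continuous fun x => acc πd Jd x univ := by
  refine continuous_iff_continuousAt.2 fun x => ?_
  simp only [ContinuousAt, acc_univ]
  refine tendsto_lintegral_of_le_of_lintegral_eq
    (g := fun x' y => ENNReal.ofReal (Jd x' y))
    (fun x' => (hA.continuous_accDens_right x').measurable.ennreal_ofReal.aemeasurable)
    (fun x' => (hA.continuous_Jd_right x').measurable.ennreal_ofReal.aemeasurable)
    (hA.continuous_accDens_right x).measurable.ennreal_ofReal.aemeasurable
    (hA.continuous_Jd_right x).measurable.ennreal_ofReal.aemeasurable
    (fun x' y => ENNReal.ofReal_le_ofReal (accDens_le hA.J_nonneg x' y))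
    (hA.ae_pi_pos.mono fun y hy =>
      (ENNReal.continuous_ofReal.comp (hA.continuous_accDens_left hy)).continuousAt)
    (ae_of_all _ fun y => (ENNReal.continuous_ofReal.comp (hA.continuous_Jd_left y)).continuousAt)
    (fun x' => by rw [hA.lintegral_Jd, hA.lintegral_Jd])
    (by rw [hA.lintegral_Jd]; exact ENNReal.one_ne_top)

lemma Assumptions.continuous_rej (hA : Assumptions πd Jd π) : Continuous (rej πd Jd) :=
  continuous_const.sub <| (ENNReal.continuousOn_toReal.comp_continuous hA.continuous_acc_univ
    fun x => ne_top_of_le_ne_top ENNReal.one_ne_top (hA.acc_univ_le_one_s13 x))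

lemma Assumptions.rej_of_pi_eq_zero (hA : Assumptions πd Jd π) {x : S} (hx : πd x = 0) :
    rej πd Jd x = 0 := by
  have hacc : acc πd Jd x = (leb S).withDensity fun y => ENNReal.ofReal (Jd x y) := by
    simp only [acc, accDens_of_pi_eq_zero hx]
  rw [rej, hacc, (hA.J_dens_prob x).measure_univ, ENNReal.toReal_one, sub_self]

/-- **Remark 3.1 (regularity of the acceptance and rejection parts).** Under
Assumptions (A.1)–(A.2): (i) for `x ∈ S₊`, `a(x,·) ≪ λ` with density
`a(x,y) = min{1, π(y)J(x|y)/(π(x)J(y|x))} J(y|x)`, continuous and bounded on `S₊ × S`;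
(ii) `r` is continuous on all of `S` and vanishes off `S₊`; in particular if `x_n → x`
with `π(x) = 0` then `a(x_n, S) → 1` and `r(x_n) → 0`. -/
theorem mh_acc_rej_regularity
    {d : ℕ} {S : Set (EuclideanSpace ℝ (Fin d))}
    (πd : S → ℝ) (Jd : S → S → ℝ) (π : Measure S) (hA : Assumptions πd Jd π) :
    (∀ x : S, x ∈ Splus πd → acc πd Jd x ≪ leb S) ∧
    (∀ x : S, x ∈ Splus πd →
      acc πd Jd x = (leb S).withDensity (fun y => ENNReal.ofReal (accDens πd Jd x y))) ∧
    ContinuousOn (fun p : S × S => accDens πd Jd p.1 p.2) (Splus πd ×ˢ Set.univ) ∧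
    (∃ C : ℝ, ∀ x y : S, x ∈ Splus πd → accDens πd Jd x y ≤ C) ∧
    Continuous (rej πd Jd) ∧
    (∀ x : S, x ∉ Splus πd → rej πd Jd x = 0) ∧
    (∀ (xseq : ℕ → S) (x : S), Filter.Tendsto xseq Filter.atTop (nhds x) → πd x = 0 →
      Filter.Tendsto (fun n => (acc πd Jd (xseq n) Set.univ).toReal) Filter.atTop (nhds 1) ∧
      Filter.Tendsto (fun n => rej πd Jd (xseq n)) Filter.atTop (nhds 0)) := by
  obtain ⟨C, hC⟩ := hA.J_bdd
  have hrej_zero : ∀ x : S, x ∉ Splus πd → rej πd Jd x = 0 := fun x hx =>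
    hA.rej_of_pi_eq_zero ((not_lt.1 hx).antisymm (hA.pi_nonneg x))
  refine ⟨fun x _ => withDensity_absolutelyContinuous _ _, fun x _ => rfl,
    continuousOn_accDens hA.pi_cont hA.J_cont hA.J_pos,
    ⟨C, fun x y _ => (accDens_le hA.J_nonneg x y).trans (hC x y)⟩, hA.continuous_rej,
    hrej_zero, fun xseq x hxseq hx => ?_⟩
  have hrej : Tendsto (fun n => rej πd Jd (xseq n)) atTop (𝓝 0) := by
    have h := (hA.continuous_rej.tendsto x).comp hxseq
    rwa [hA.rej_of_pi_eq_zero hx] at h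
  refine ⟨?_, hrej⟩
  simpa [rej] using hrej.const_sub 1

end MHLDP
end
end
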